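/- arXiv:2211.15431 — 3 statements merged into one kernel-verified Lean document; each statement's English description precedes it below -/
import Mathlib

section
/- Consider the single-maturity clearing model with n = 2 banks, r = 0, β = 0, ℓ = 1, T = 1, Ω = {ω_1, ω_2} with ℙ(ω_1) = ℙ(ω_2) = 1/2, F_{t_0} = {∅, Ω}, F_T = 2^Ω, external assets x(0) = (1.6, 1.6), x(T)(ω_1) = (1.9, 1.3), x(T)(ω_2) = (1.3, 1.9), interbank liabilities L_{12} = L_{21} = 1, and external liabilities L_{10} = L_{20} = 1 (so p̄_1 = p̄_2 = 2). Then the clearing map Ψ^T of this system has at least four pairwise distinct fixed points; in particular, the no-default triple (with P ≡ 1 and τ ≡ T+1) and the all-default triple (with P ≡ 0 and τ ≡ t_0) are both clearing solutions, so clearing solutions are not unique. -/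
open MeasureTheory

namespace Paper

open Classical in
/-- real-valued indicator of a proposition -/
noncomputable def indR (p : Prop) : ℝ := if p then 1 else 0

open Classical in
/-- boolean indicator of a proposition -/
noncomputable def indB (p : Prop) : Bool := if p then true else false

/-- The atom of the σ-algebra `m` containing the point `ω`:
the intersection of all `m`-measurable sets containing `ω`. -/
def atomOf {Ω : Type*} (m : MeasurableSpace Ω) (ω : Ω) : Set Ω :=
  ⋂₀ {s : Set Ω | MeasurableSet[m] s ∧ ω ∈ s}

/-- The set `S`, with the order induced from the ambient preorder, is a nonempty complete
lattice: it has a greatest and a least element and every subset of `S` has a least upper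
bound and a greatest lower bound within `S`. -/
def LatticeStructure {X : Type*} [Preorder X] (S : Set X) : Prop :=
  S.Nonempty ∧
  (∃ top ∈ S, ∀ z ∈ S, z ≤ top) ∧
  (∃ bot ∈ S, ∀ z ∈ S, bot ≤ z) ∧
  (∀ A ⊆ S,
    (∃ u ∈ S, (∀ a ∈ A, a ≤ u) ∧ ∀ w ∈ S, (∀ a ∈ A, a ≤ w) → u ≤ w) ∧
    (∃ v ∈ S, (∀ a ∈ A, v ≤ a) ∧ ∀ w ∈ S, (∀ a ∈ A, w ≤ a) → w ≤ v))

/-- The space of triples `(K, P, τ)`: capital process, survival-probability process,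
default-time vector, with the componentwise (pointwise) order. -/
abbrev Tri (Ω : Type*) (n ℓ : ℕ) :=
  (Fin (ℓ+1) → Ω → Fin n → ℝ) × (Fin (ℓ+1) → Ω → Fin n → ℝ) × (Fin n → Ω → ℝ)

/-- Data of the single-maturity interbank model. -/
structure SM (Ω : Type*) (n ℓ : ℕ) where
  /-- maturity -/
  T : ℝ
  /-- times `0 = t 0 < t 1 < ... < t ℓ = T` -/
  t : Fin (ℓ+1) → ℝ
  /-- external asset process -/
  x : Fin (ℓ+1) → Ω → Fin n → ℝ
  /-- interbank liabilities -/
  L : Fin n → Fin n → ℝ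
  /-- external liabilities -/
  L0 : Fin n → ℝ
  /-- recovery rate -/
  β : ℝ
  /-- risk-free rate -/
  r : ℝ

namespace SM

variable {Ω : Type*} {n ℓ : ℕ}

/-- total liabilities `p̄_i` -/
noncomputable def pbar (M : SM Ω n ℓ) (i : Fin n) : ℝ := (∑ j, M.L i j) + M.L0 i

/-- discount factor `e^{-r (T - t l)}` -/
noncomputable def disc (M : SM Ω n ℓ) (l : Fin (ℓ+1)) : ℝ :=
  Real.exp (-(M.r * (M.T - M.t l)))

/-- the capital component `Ψ^T_K` of the clearing map -/
noncomputable def ΨK (M : SM Ω n ℓ) (l : Fin (ℓ+1)) (Pt : Ω → Fin n → ℝ)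
    (ω : Ω) (i : Fin n) : ℝ :=
  M.x l ω i + M.disc l * (∑ j, M.L j i * (M.β + (1 - M.β) * Pt ω j))
    - M.disc l * M.pbar i

/-- the default-time component `Ψ^T_τ` of the clearing map: the first time `t l` at which
the capital of bank `i` is negative, and `T + 1` if the capital stays nonnegative -/
noncomputable def Ψτ (M : SM Ω n ℓ) (K : Fin (ℓ+1) → Ω → Fin n → ℝ)
    (i : Fin n) (ω : Ω) : ℝ :=
  sInf (insert (M.T + 1) ((fun l => M.t l) '' {l : Fin (ℓ+1) | K l ω i < 0}))

/-- the survival-probability component `Ψ^T_P` of the clearing map: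
`ℙ(τ_i > T | 𝓕 l)` -/
noncomputable def ΨP [MeasurableSpace Ω] (M : SM Ω n ℓ)
    (𝓕 : Fin (ℓ+1) → MeasurableSpace Ω) (μ : Measure Ω)
    (τ : Fin n → Ω → ℝ) (l : Fin (ℓ+1)) (ω : Ω) (i : Fin n) : ℝ :=
  (μ[fun ω' => indR (M.T < τ i ω') | 𝓕 l]) ω

/-- membership in the domain `𝔻^T`: adaptedness, the balance-sheet bounds on `K`,
`P` valued in `[0,1]`, and `τ` valued in `{t_0, ..., t_ℓ, T+1}` -/
def memD [MeasurableSpace Ω] (M : SM Ω n ℓ) (𝓕 : Fin (ℓ+1) → MeasurableSpace Ω)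
    (K P : Fin (ℓ+1) → Ω → Fin n → ℝ) (τ : Fin n → Ω → ℝ) : Prop :=
  (∀ l i, Measurable[𝓕 l] fun ω => K l ω i) ∧
  (∀ l i, Measurable[𝓕 l] fun ω => P l ω i) ∧
  (∀ l ω i, M.x l ω i - M.disc l * M.pbar i ≤ K l ω i) ∧
  (∀ l ω i, K l ω i ≤ M.x l ω i + M.disc l * ((∑ j, M.L j i) - M.pbar i)) ∧
  (∀ l ω i, 0 ≤ P l ω i ∧ P l ω i ≤ 1) ∧
  (∀ i ω, (∃ l, τ i ω = M.t l) ∨ τ i ω = M.T + 1)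

/-- the clearing map `Ψ^T` -/
noncomputable def Ψmap [MeasurableSpace Ω] (M : SM Ω n ℓ)
    (𝓕 : Fin (ℓ+1) → MeasurableSpace Ω) (μ : Measure Ω) (z : Tri Ω n ℓ) : Tri Ω n ℓ :=
  (fun l ω i => M.ΨK l (z.2.1 l) ω i,
   fun l ω i => M.ΨP 𝓕 μ z.2.2 l ω i,
   fun i ω => M.Ψτ z.1 i ω)

/-- the set of clearing solutions: fixed points of `Ψ^T` in `𝔻^T` -/
def clearingSet [MeasurableSpace Ω] (M : SM Ω n ℓ)
    (𝓕 : Fin (ℓ+1) → MeasurableSpace Ω) (μ : Measure Ω) : Set (Tri Ω n ℓ) :=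
  {z | M.memD 𝓕 z.1 z.2.1 z.2.2 ∧ M.Ψmap 𝓕 μ z = z}

/-- Standing assumptions of the single-maturity model. -/
structure Valid [MeasurableSpace Ω] (M : SM Ω n ℓ)
    (𝓕 : Fin (ℓ+1) → MeasurableSpace Ω) (μ : Measure Ω) : Prop where
  hn : 1 ≤ n
  hTop : (inferInstance : MeasurableSpace Ω) = ⊤
  hprob : IsProbabilityMeasure μ
  hpos : ∀ ω : Ω, 0 < μ {ω}
  hmono : Monotone 𝓕
  h0 : 𝓕 0 = ⊥
  hlast : 𝓕 (Fin.last ℓ) = (inferInstance : MeasurableSpace Ω)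
  ht : StrictMono M.t
  ht0 : M.t 0 = 0
  htT : M.t (Fin.last ℓ) = M.T
  hx : ∀ l i, Measurable[𝓕 l] fun ω => M.x l ω i
  hx0 : ∀ l ω i, 0 ≤ M.x l ω i
  hL : ∀ i j, 0 ≤ M.L i j
  hLd : ∀ i, M.L i i = 0
  hL0 : ∀ i, 0 ≤ M.L0 i
  hβ0 : 0 ≤ M.β
  hβ1 : M.β ≤ 1
  hr : 0 ≤ M.r

end SM

/-!
With `r = 0` and `β = 0` a bank's capital is its external assets plus the survival probability
of the other bank, minus `p̄ = 2`. A triple is therefore determined by its survival process `P`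
(`K = Ψ_K(P)`, `τ = Ψ_τ(K)`), and it is a clearing solution exactly when `P = Ψ_P(τ)`.
Take `P(T)` to be the indicator, common to both banks, of a set `S ⊆ Ω` of surviving scenarios,
and `P(0) = ℙ(S)`. Terminal assets lie in `[1.3, 1.9]`, so a bank survives at `T` exactly when
the other one repays in full, i.e. when `ω ∈ S`; at `t₀` its capital `1.6 + ℙ(S) - 2` is
nonnegative when `S ≠ ∅` and negative when `S = ∅`. Hence each of the four sets `S` is
self-consistent.
-/

namespace SM

variable {Ω : Type*} {n ℓ : ℕ} (M : SM Ω n ℓ)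

lemma disc_pos (l : Fin (ℓ+1)) : 0 < M.disc l := Real.exp_pos _

lemma ΨK_mem_bounds (hβ0 : 0 ≤ M.β) (hβ1 : M.β ≤ 1) (hL : ∀ i j, 0 ≤ M.L i j)
    {Pt : Ω → Fin n → ℝ} (hP : ∀ ω j, 0 ≤ Pt ω j ∧ Pt ω j ≤ 1) (l : Fin (ℓ+1)) (ω : Ω)
    (i : Fin n) :
    M.x l ω i - M.disc l * M.pbar i ≤ M.ΨK l Pt ω i ∧
      M.ΨK l Pt ω i ≤ M.x l ω i + M.disc l * ((∑ j, M.L j i) - M.pbar i) := by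
  have hw : ∀ j, 0 ≤ M.β + (1 - M.β) * Pt ω j ∧ M.β + (1 - M.β) * Pt ω j ≤ 1 := fun j =>
    ⟨by nlinarith [hP ω j], by nlinarith [hP ω j]⟩
  have hsum_nonneg : 0 ≤ ∑ j, M.L j i * (M.β + (1 - M.β) * Pt ω j) :=
    Finset.sum_nonneg fun j _ => mul_nonneg (hL j i) (hw j).1
  have hsum_le : ∑ j, M.L j i * (M.β + (1 - M.β) * Pt ω j) ≤ ∑ j, M.L j i :=
    Finset.sum_le_sum fun j _ => mul_le_of_le_one_right (hL j i) (hw j).2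
  have hd := (M.disc_pos l).le
  unfold ΨK
  constructor
  · nlinarith [mul_nonneg hd hsum_nonneg]
  · nlinarith [mul_le_mul_of_nonneg_left hsum_le hd]

lemma Ψτ_mem (K : Fin (ℓ+1) → Ω → Fin n → ℝ) (i : Fin n) (ω : Ω) :
    (∃ l, M.Ψτ K i ω = M.t l) ∨ M.Ψτ K i ω = M.T + 1 := by
  have h : M.Ψτ K i ω ∈ insert (M.T + 1) ((fun l => M.t l) '' {l | K l ω i < 0}) :=
    (Set.insert_nonempty _ _).csInf_mem (Set.toFinite _)
  rcases h with h | ⟨l, -, hl⟩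
  · exact Or.inr h
  · exact Or.inl ⟨l, hl.symm⟩

variable {M} {K : Fin (ℓ+1) → Ω → Fin n → ℝ} {i : Fin n} {ω : Ω}

lemma Ψτ_eq_T_add_one (h : ∀ l, 0 ≤ K l ω i) : M.Ψτ K i ω = M.T + 1 := by
  have hS : {l | K l ω i < 0} = ∅ :=
    Set.eq_empty_of_forall_notMem fun l hl => (h l).not_gt hl
  simp [Ψτ, hS]

lemma Ψτ_le {l : Fin (ℓ+1)} (hl : K l ω i < 0) : M.Ψτ K i ω ≤ M.t l :=
  csInf_le (Set.toFinite _).bddBelow (Set.mem_insert_of_mem _ ⟨l, hl, rfl⟩)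

lemma Ψτ_eq_t (ht : Monotone M.t) {l : Fin (ℓ+1)} (hl : K l ω i < 0)
    (hfirst : ∀ l' < l, 0 ≤ K l' ω i) (hT : M.t l ≤ M.T + 1) : M.Ψτ K i ω = M.t l := by
  refine IsLeast.csInf_eq ⟨Set.mem_insert_of_mem _ ⟨l, hl, rfl⟩, ?_⟩
  rintro _ (rfl | ⟨l', hl', rfl⟩)
  · exact hT
  · exact ht (not_lt.1 fun h => (hfirst l' h).not_gt hl')

lemma T_lt_Ψτ_iff (htT : ∀ l, M.t l ≤ M.T) : M.T < M.Ψτ K i ω ↔ ∀ l, 0 ≤ K l ω i := by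
  refine ⟨fun h l => not_lt.1 fun hl => ?_, fun h => by rw [Ψτ_eq_T_add_one h]; linarith⟩
  linarith [Ψτ_le (M := M) hl, htT l]

variable (M)

noncomputable def capital (P : Fin (ℓ+1) → Ω → Fin n → ℝ) : Fin (ℓ+1) → Ω → Fin n → ℝ :=
  fun l ω i => M.ΨK l (P l) ω i

noncomputable def extend (P : Fin (ℓ+1) → Ω → Fin n → ℝ) : Tri Ω n ℓ :=
  (M.capital P, P, fun i ω => M.Ψτ (M.capital P) i ω)

lemma extend_injective : Function.Injective M.extend := fun _ _ h => congrArg (·.2.1) h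

lemma measurable_capital {m : MeasurableSpace Ω} {P : Fin (ℓ+1) → Ω → Fin n → ℝ}
    {l : Fin (ℓ+1)} (hx : ∀ i, Measurable[m] fun ω => M.x l ω i)
    (hP : ∀ j, Measurable[m] fun ω => P l ω j) (i : Fin n) :
    Measurable[m] fun ω => M.capital P l ω i := by
  unfold capital ΨK
  fun_prop

variable [MeasurableSpace Ω] (𝓕 : Fin (ℓ+1) → MeasurableSpace Ω) (μ : Measure Ω)

theorem extend_mem_clearingSet (hx : ∀ l i, Measurable[𝓕 l] fun ω => M.x l ω i)
    (hL : ∀ i j, 0 ≤ M.L i j) (hβ0 : 0 ≤ M.β) (hβ1 : M.β ≤ 1)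
    {P : Fin (ℓ+1) → Ω → Fin n → ℝ} (hPm : ∀ l i, Measurable[𝓕 l] fun ω => P l ω i)
    (hP : ∀ l ω i, 0 ≤ P l ω i ∧ P l ω i ≤ 1)
    (hfix : ∀ l ω i, M.ΨP 𝓕 μ (M.extend P).2.2 l ω i = P l ω i) :
    M.extend P ∈ M.clearingSet 𝓕 μ :=
  ⟨⟨fun l => M.measurable_capital (hx l) (hPm l), hPm,
    fun l ω i => (M.ΨK_mem_bounds hβ0 hβ1 hL (hP l) l ω i).1,
    fun l ω i => (M.ΨK_mem_bounds hβ0 hβ1 hL (hP l) l ω i).2, hP, M.Ψτ_mem _⟩,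
   Prod.ext rfl (Prod.ext (funext fun l => funext₂ (hfix l)) rfl)⟩

variable {𝓕 μ} {τ : Fin n → Ω → ℝ} {l : Fin (ℓ+1)}

lemma ΨP_of_eq_bot [IsProbabilityMeasure μ] (h : 𝓕 l = ⊥) (ω : Ω) (i : Fin n) :
    M.ΨP 𝓕 μ τ l ω i = ∫ ω', indR (M.T < τ i ω') ∂μ := by
  rw [ΨP, h, condExp_bot]

lemma ΨP_of_eq_top [DiscreteMeasurableSpace Ω] [Finite Ω] [IsFiniteMeasure μ] (h : 𝓕 l = ⊤)
    (ω : Ω) (i : Fin n) : M.ΨP 𝓕 μ τ l ω i = indR (M.T < τ i ω) := by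
  rw [ΨP, h, condExp_of_stronglyMeasurable (fun s _ => MeasurableSet.of_discrete)
    (@StronglyMeasurable.of_discrete _ _ ⊤ _ _ _ _) Integrable.of_finite]

end SM

lemma measurable_of_eq_bot_of_eq_top {Ω : Type*} {𝓕 : Fin 2 → MeasurableSpace Ω}
    (h0 : 𝓕 0 = ⊥) (h1 : 𝓕 1 = ⊤) {g : Fin 2 → Ω → ℝ} (hg : ∀ ω ω', g 0 ω = g 0 ω') :
    ∀ l, Measurable[𝓕 l] (g l) := by
  refine Fin.forall_fin_two.2 ⟨?_, ?_⟩
  · rw [h0]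
    exact @measurable_const' _ _ _ ⊥ _ hg
  · rw [h1]
    exact measurable_from_top

lemma integral_bool_of_half {μ : Measure Bool} [IsFiniteMeasure μ] (h1 : μ {false} = 1/2)
    (h2 : μ {true} = 1/2) (f : Bool → ℝ) : ∫ ω, f ω ∂μ = (f false + f true) / 2 := by
  rw [integral_fintype Integrable.of_finite, Fintype.sum_bool, measureReal_def,
    measureReal_def, h1, h2]
  norm_num
  ring

noncomputable def survivalProcess {n : ℕ} (a b : ℝ) : Fin 2 → Bool → Fin n → ℝ :=
  fun l ω _ => if l = 0 then (a + b) / 2 else cond ω b a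

lemma survivalProcess_mem_unitInterval {n : ℕ} {a b : ℝ} (ha : 0 ≤ a ∧ a ≤ 1)
    (hb : 0 ≤ b ∧ b ≤ 1) (l : Fin 2) (ω : Bool) (i : Fin n) :
    0 ≤ survivalProcess a b l ω i ∧ survivalProcess a b l ω i ≤ 1 := by
  unfold survivalProcess
  split_ifs
  · constructor <;> linarith
  · cases ω <;> assumption

lemma survivalProcess_injective {n : ℕ} [NeZero n] :
    Function.Injective (Function.uncurry (survivalProcess (n := n))) := by
  rintro ⟨a, b⟩ ⟨a', b'⟩ h
  have ha := congrFun (congrFun (congrFun h 1) false) 0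
  have hb := congrFun (congrFun (congrFun h 1) true) 0
  simp only [Function.uncurry_apply_pair, survivalProcess] at ha hb
  simp_all

lemma survivalProcess_self {n : ℕ} (c : ℝ) :
    survivalProcess (n := n) c c = fun _ _ _ => c := by
  funext l ω i
  cases ω <;> simp [survivalProcess]

lemma SM.ΨP_eq_survivalProcess {n : ℕ} (M : SM Bool n 1) {𝓕 : Fin 2 → MeasurableSpace Bool}
    {μ : Measure Bool} [IsProbabilityMeasure μ] (hμ1 : μ {false} = 1/2) (hμ2 : μ {true} = 1/2)
    (h𝓕0 : 𝓕 0 = ⊥) (h𝓕1 : 𝓕 1 = ⊤) {a b : ℝ} {τ : Fin n → Bool → ℝ}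
    (hτ : ∀ i ω, indR (M.T < τ i ω) = cond ω b a) :
    ∀ l ω i, M.ΨP 𝓕 μ τ l ω i = survivalProcess a b l ω i := by
  refine Fin.forall_fin_two.2 ⟨fun ω i => ?_, fun ω i => ?_⟩
  · rw [M.ΨP_of_eq_bot h𝓕0, integral_bool_of_half hμ1 hμ2]
    simp [survivalProcess, hτ]
  · rw [M.ΨP_of_eq_top h𝓕1, hτ]
    simp [survivalProcess]

noncomputable def twoBankExample : SM Bool 2 1 where
  T := 1
  t := ![0, 1]
  x := ![fun _ => ![1.6, 1.6], fun ω => cond ω ![1.3, 1.9] ![1.9, 1.3]]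
  L := ![![0, 1], ![1, 0]]
  L0 := fun _ => 1
  β := 0
  r := 0

lemma eq_twoBankExample {M : SM Bool 2 1} (hT : M.T = 1) (ht0 : M.t 0 = 0) (ht1 : M.t 1 = 1)
    (hr : M.r = 0) (hβ : M.β = 0) (hx0 : ∀ ω i, M.x 0 ω i = 1.6)
    (hx11 : M.x 1 false 0 = 1.9) (hx12 : M.x 1 false 1 = 1.3)
    (hx21 : M.x 1 true 0 = 1.3) (hx22 : M.x 1 true 1 = 1.9)
    (hL12 : M.L 0 1 = 1) (hL21 : M.L 1 0 = 1) (hL11 : M.L 0 0 = 0) (hL22 : M.L 1 1 = 0)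
    (hL0 : ∀ i, M.L0 i = 1) : M = twoBankExample := by
  obtain ⟨T, t, x, L, L0, β, r⟩ := M
  unfold twoBankExample
  simp only [SM.mk.injEq]
  refine ⟨hT, ?_, ?_, ?_, funext hL0, hβ, hr⟩
  · funext l
    fin_cases l <;> simp_all
  · funext l ω i
    fin_cases l <;> cases ω <;> fin_cases i <;> simp_all
  · funext i j
    fin_cases i <;> fin_cases j <;> simp_all

namespace twoBankExample

lemma t_monotone : Monotone twoBankExample.t :=
  Fin.monotone_iff_le_succ.2 fun j => by fin_cases j; simp [twoBankExample]

lemma t_le_T (l : Fin 2) : twoBankExample.t l ≤ twoBankExample.T := by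
  fin_cases l <;> simp [twoBankExample]

lemma capital_survivalProcess (a b : ℝ) (l : Fin 2) (ω : Bool) (i : Fin 2) :
    twoBankExample.capital (survivalProcess a b) l ω i =
      twoBankExample.x l ω i + survivalProcess a b l ω i - 2 := by
  fin_cases i <;>
    simp [SM.capital, SM.ΨK, SM.disc, SM.pbar, twoBankExample, Fin.sum_univ_two,
      survivalProcess] <;> norm_num

lemma indR_T_lt_Ψτ_capital_survivalProcess {a b : ℝ} (ha : a = 0 ∨ a = 1)
    (hb : b = 0 ∨ b = 1) (i : Fin 2) (ω : Bool) :
    indR (twoBankExample.T <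
      twoBankExample.Ψτ (twoBankExample.capital (survivalProcess a b)) i ω) = cond ω b a := by
  rw [SM.T_lt_Ψτ_iff t_le_T]
  -- `Nat.reduceAdd` turns the index type `Fin (1 + 1)` into `Fin 2` for `Fin.forall_fin_two`.
  simp only [capital_survivalProcess, Nat.reduceAdd, Fin.forall_fin_two]
  rcases ha with rfl | rfl <;> rcases hb with rfl | rfl <;> cases ω <;> fin_cases i <;>
    norm_num [indR, survivalProcess, twoBankExample]

variable {𝓕 : Fin 2 → MeasurableSpace Bool} {μ : Measure Bool} [IsProbabilityMeasure μ]

theorem extend_survivalProcess_mem_clearingSet (hμ1 : μ {false} = 1/2)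
    (hμ2 : μ {true} = 1/2) (h𝓕0 : 𝓕 0 = ⊥) (h𝓕1 : 𝓕 1 = ⊤) {a b : ℝ}
    (ha : a = 0 ∨ a = 1) (hb : b = 0 ∨ b = 1) :
    twoBankExample.extend (survivalProcess a b) ∈ twoBankExample.clearingSet 𝓕 μ := by
  refine twoBankExample.extend_mem_clearingSet 𝓕 μ ?_ ?_ le_rfl zero_le_one ?_ ?_
    (twoBankExample.ΨP_eq_survivalProcess hμ1 hμ2 h𝓕0 h𝓕1
      (indR_T_lt_Ψτ_capital_survivalProcess ha hb))
  · exact fun l i => measurable_of_eq_bot_of_eq_top h𝓕0 h𝓕1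
      (g := fun l ω => twoBankExample.x l ω i) (fun _ _ => rfl) l
  · intro i j
    fin_cases i <;> fin_cases j <;> simp [twoBankExample]
  · exact fun l i => measurable_of_eq_bot_of_eq_top h𝓕0 h𝓕1
      (g := fun l ω => survivalProcess a b l ω i) (fun _ _ => rfl) l
  · exact survivalProcess_mem_unitInterval (by rcases ha with rfl | rfl <;> norm_num)
      (by rcases hb with rfl | rfl <;> norm_num)

lemma extend_survivalProcess_one_one :
    twoBankExample.extend (survivalProcess 1 1) =
      (twoBankExample.capital (survivalProcess 1 1), fun _ _ _ => 1,
        fun _ _ => twoBankExample.T + 1) := by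
  refine Prod.ext rfl (Prod.ext (survivalProcess_self 1) (funext₂ fun i ω => ?_))
  refine SM.Ψτ_eq_T_add_one fun l => ?_
  rw [capital_survivalProcess]
  fin_cases l <;> cases ω <;> fin_cases i <;> norm_num [survivalProcess, twoBankExample]

lemma extend_survivalProcess_zero_zero :
    twoBankExample.extend (survivalProcess 0 0) =
      (twoBankExample.capital (survivalProcess 0 0), fun _ _ _ => 0,
        fun _ _ => twoBankExample.t 0) := by
  refine Prod.ext rfl (Prod.ext (survivalProcess_self 0) (funext₂ fun i ω => ?_))
  refine SM.Ψτ_eq_t t_monotone ?_ (fun l h => absurd h (Fin.not_lt_zero l))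
    (by norm_num [twoBankExample])
  rw [capital_survivalProcess]
  cases ω <;> fin_cases i <;> norm_num [survivalProcess, twoBankExample]

end twoBankExample

open SM in
/-- `Ω = Bool` with `ω₁ = false`, `ω₂ = true`; bank indices `0, 1` stand for banks `1, 2`. -/
theorem clearing_solutions_nonunique
    (M : SM Bool 2 1) (𝓕 : Fin 2 → MeasurableSpace Bool)
    (μ : MeasureTheory.Measure Bool) [MeasureTheory.IsProbabilityMeasure μ]
    (hμ1 : μ {false} = 1/2) (hμ2 : μ {true} = 1/2)
    (h𝓕0 : 𝓕 0 = ⊥) (h𝓕1 : 𝓕 1 = ⊤)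
    (hT : M.T = 1) (ht0 : M.t 0 = 0) (ht1 : M.t 1 = 1)
    (hr : M.r = 0) (hβ : M.β = 0)
    (hx0 : ∀ ω i, M.x 0 ω i = 1.6)
    (hx11 : M.x 1 false 0 = 1.9) (hx12 : M.x 1 false 1 = 1.3)
    (hx21 : M.x 1 true 0 = 1.3) (hx22 : M.x 1 true 1 = 1.9)
    (hL12 : M.L 0 1 = 1) (hL21 : M.L 1 0 = 1)
    (hL11 : M.L 0 0 = 0) (hL22 : M.L 1 1 = 0)
    (hL0 : ∀ i, M.L0 i = 1) :
    (∃ z1 z2 z3 z4 : Tri Bool 2 1,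
      z1 ∈ M.clearingSet 𝓕 μ ∧ z2 ∈ M.clearingSet 𝓕 μ ∧
      z3 ∈ M.clearingSet 𝓕 μ ∧ z4 ∈ M.clearingSet 𝓕 μ ∧
      z1 ≠ z2 ∧ z1 ≠ z3 ∧ z1 ≠ z4 ∧ z2 ≠ z3 ∧ z2 ≠ z4 ∧ z3 ≠ z4) ∧
    (∃ K : Fin 2 → Bool → Fin 2 → ℝ,
      (K, fun _ _ _ => (1:ℝ), fun _ _ => M.T + 1) ∈ M.clearingSet 𝓕 μ) ∧
    (∃ K : Fin 2 → Bool → Fin 2 → ℝ,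
      (K, fun _ _ _ => (0:ℝ), fun _ _ => M.t 0) ∈ M.clearingSet 𝓕 μ) := by
  obtain rfl :=
    eq_twoBankExample hT ht0 ht1 hr hβ hx0 hx11 hx12 hx21 hx22 hL12 hL21 hL11 hL22 hL0
  set z : ℝ × ℝ → Tri Bool 2 1 := fun s => twoBankExample.extend (survivalProcess s.1 s.2)
  have hz : ∀ {a b : ℝ}, (a = 0 ∨ a = 1) → (b = 0 ∨ b = 1) →
      z (a, b) ∈ twoBankExample.clearingSet 𝓕 μ := fun ha hb =>
    twoBankExample.extend_survivalProcess_mem_clearingSet hμ1 hμ2 h𝓕0 h𝓕1 ha hb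
  have hz_inj : Function.Injective z :=
    twoBankExample.extend_injective.comp survivalProcess_injective
  refine ⟨⟨z (1, 1), z (0, 0), z (1, 0), z (0, 1), hz (by simp) (by simp),
    hz (by simp) (by simp), hz (by simp) (by simp), hz (by simp) (by simp),
    hz_inj.ne (by norm_num), hz_inj.ne (by norm_num), hz_inj.ne (by norm_num),
    hz_inj.ne (by norm_num), hz_inj.ne (by norm_num), hz_inj.ne (by norm_num)⟩, ?_, ?_⟩
  · have h := hz (a := 1) (b := 1) (by simp) (by simp)
    rw [show z (1, 1) = _ from twoBankExample.extend_survivalProcess_one_one] at h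
    exact ⟨_, h⟩
  · have h := hz (a := 0) (b := 0) (by simp) (by simp)
    rw [show z (0, 0) = _ from twoBankExample.extend_survivalProcess_zero_zero] at h
    exact ⟨_, h⟩

end Paper
end

section
/- Assume additionally that every atom of F_{t_l} with l < ℓ contains exactly n+1 atoms of F_{t_{l+1}}, and that the discounted external assets x̃(t) := e^{−rt} x(t) form an ℝ^n-valued martingale such that for every l < ℓ and every atom ω of F_{t_l}, listing the n+1 successor atoms ω^{(1)}, ..., ω^{(n+1)}, the n vectors (x̃_k(t_{l+1}, ω^{(1)}), ..., x̃_k(t_{l+1}, ω^{(n+1)})) ∈ ℝ^{n+1} for k = 1, ..., n together with the all-ones vector are linearly independent (as holds for a nondegenerate geometric random walk on a multinomial tree). Then for any clearing solution (K, P, τ) of Ψ^T, setting K̃(t) := e^{−rt} K(t), there exist adapted ℝ^n-valued processes θ_j = (θ_j(t_l))_{l=0}^{ℓ−1}, j = 1, ..., n, such that for every bank i and every l < ℓ: K̃_i(t_{l+1}) − K̃_i(t_l) = (x̃_i(t_{l+1}) − x̃_i(t_l)) + (1−β) Σ_{j=1}^n L_{ji} θ_j(t_l)ᵀ (x̃(t_{l+1})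 − x̃(t_l)), with initial condition K̃_i(0) = x̃_i(0) + e^{−rT} Σ_{j=1}^n L_{ji}(β + (1−β)ℙ(τ_j > T)) − e^{−rT} p̄_i and terminal condition K̃_i(T) = x̃_i(T) + e^{−rT}(Σ_{j=1}^n L_{ji}(β + (1−β)1{τ_j > T}) − p̄_i). -/
/-!
At a clearing solution the discounted capital is
`K̃_i(t) = x̃_i(t) + e^{-rT} (∑_j L_{ji} (β + (1-β) P_j(t)) - p̄_i)`
with `P_j(t) = ℙ(τ_j > T | 𝓕_t)`, so `P_j` is a martingale, equal to `ℙ(τ_j > T)` at time `0`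
and to `1{τ_j > T}` at time `T`.
On a node of the tree, the constant vector and the values of `x̃_1, …, x̃_n` on the `n + 1`
successor atoms form a basis of `ℝ^{n+1}`, so the next value of `P_j` is an affine function
`c + θᵀ x̃` of the next asset values. Integrating over the node, the martingale property of
`P_j` and of `x̃` shows that the current value is `c + θᵀ x̃` as well, so the increment is `θᵀ Δx̃`.
-/

open MeasureTheory

namespace Paper

section Atoms

variable {Ω : Type*} {m : MeasurableSpace Ω} {ω ω' : Ω}

theorem mem_atomOf (m : MeasurableSpace Ω) (ω : Ω) : ω ∈ atomOf m ω :=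
  Set.mem_sInter.2 fun _ hs => hs.2

theorem atomOf_subset {s : Set Ω} (hs : MeasurableSet[m] s) (hω : ω ∈ s) : atomOf m ω ⊆ s :=
  Set.sInter_subset_of_mem ⟨hs, hω⟩

theorem mem_atomOf_comm (h : ω' ∈ atomOf m ω) : ω ∈ atomOf m ω' := by
  refine Set.mem_sInter.2 fun s hs => ?_
  by_contra hωs
  exact atomOf_subset hs.1.compl hωs h hs.2

theorem _root_.Measurable.apply_eq_of_mem_atomOf {β : Type*} [MeasurableSpace β]
    [MeasurableSingletonClass β] {f : Ω → β} (hf : Measurable[m] f) (h : ω' ∈ atomOf m ω) :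
    f ω' = f ω :=
  atomOf_subset (hf (measurableSet_singleton (f ω))) rfl h

variable [Finite Ω]

theorem measurableSet_atomOf (m : MeasurableSpace Ω) (ω : Ω) : MeasurableSet[m] (atomOf m ω) :=
  MeasurableSet.sInter (Set.to_countable _) fun _ hs => hs.1

theorem atomOf_eq_of_mem (h : ω' ∈ atomOf m ω) : atomOf m ω' = atomOf m ω :=
  (atomOf_subset (measurableSet_atomOf m ω) h).antisymm
    (atomOf_subset (measurableSet_atomOf m ω') (mem_atomOf_comm h))

theorem measurable_of_forall_mem_atomOf {β : Type*} [MeasurableSpace β] {f : Ω → β}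
    (h : ∀ ω ω', ω' ∈ atomOf m ω → f ω' = f ω) : Measurable[m] f := by
  intro s _
  have hunion : f ⁻¹' s = ⋃ ω ∈ f ⁻¹' s, atomOf m ω := by
    ext ω'
    refine ⟨fun hω' => Set.mem_biUnion hω' (mem_atomOf m ω'), fun hω' => ?_⟩
    obtain ⟨ω, hω, hω'⟩ := Set.mem_iUnion₂.1 hω'
    exact show f ω' ∈ s from (h ω ω' hω').symm ▸ hω
  rw [hunion]
  exact MeasurableSet.biUnion (Set.to_countable _) fun ω _ => measurableSet_atomOf m ω

theorem exists_forall_mem_atomOf_of_forall {β : Type*} {p : Ω → β → Prop}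
    (h : ∀ ω₀, ∃ b, ∀ ω ∈ atomOf m ω₀, p ω b) :
    ∃ g : Ω → β, (∀ ω ω', ω' ∈ atomOf m ω → g ω' = g ω) ∧ ∀ ω, p ω (g ω) := by
  choose b hb using h
  let rep : Ω → Ω := fun ω => (Set.nonempty_of_mem (mem_atomOf m ω)).some
  have hrep : ∀ ω, atomOf m (rep ω) = atomOf m ω :=
    fun ω => atomOf_eq_of_mem (Set.Nonempty.some_mem _)
  refine ⟨fun ω => b (rep ω), fun ω ω' hω' => ?_,
    fun ω => hb _ ω ((hrep ω).symm ▸ mem_atomOf m ω)⟩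
  have hA : atomOf m ω' = atomOf m ω := atomOf_eq_of_mem hω'
  simp only [rep, hA]

theorem exists_enum_of_ncard_eq {m₁ m₂ : MeasurableSpace Ω} {ω₀ : Ω} {N : ℕ}
    (h : {A : Set Ω | ∃ ω ∈ atomOf m₁ ω₀, A = atomOf m₂ ω}.ncard = N) :
    ∃ e : Fin N → Ω, (∀ j, e j ∈ atomOf m₁ ω₀) ∧
      (∀ j j', j ≠ j' → atomOf m₂ (e j) ≠ atomOf m₂ (e j')) ∧
      ∀ ω ∈ atomOf m₁ ω₀, ∃ j, ω ∈ atomOf m₂ (e j) := by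
  set S := {A : Set Ω | ∃ ω ∈ atomOf m₁ ω₀, A = atomOf m₂ ω}
  let enum : S ≃ Fin N := Finite.equivFinOfCardEq h
  choose e he hatom using fun j => (enum.symm j).2
  refine ⟨e, he, fun j j' hjj' heq => hjj' ?_, fun ω hω => ⟨enum ⟨_, ω, hω, rfl⟩, ?_⟩⟩
  · exact enum.symm.injective (Subtype.ext (by rw [hatom, hatom, heq]))
  · rw [← hatom, Equiv.symm_apply_apply]
    exact mem_atomOf m₂ ω

end Atoms

theorem exists_eq_add_sum_mul_of_linearIndependent {N : ℕ} {v : Fin N → Fin (N+1) → ℝ}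
    (hv : LinearIndependent ℝ (Fin.cons (fun _ : Fin (N+1) => (1:ℝ)) v)) (w : Fin (N+1) → ℝ) :
    ∃ (c : ℝ) (θ : Fin N → ℝ), ∀ j, w j = c + ∑ k, θ k * v k j := by
  have hspan := hv.span_eq_top_of_card_eq_finrank (by simp)
  obtain ⟨a, ha⟩ :=
    (Submodule.mem_span_range_iff_exists_fun ℝ).1 (hspan ▸ Submodule.mem_top (x := w))
  refine ⟨a 0, fun k => a k.succ, fun j => ?_⟩
  rw [← ha, Fin.sum_univ_succ]
  simp [Finset.sum_apply]

section Representation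

variable {Ω : Type*} {n : ℕ}

theorem exists_eq_add_sum_mul_on_of_linearIndependent {m₂ : MeasurableSpace Ω}
    {X : Ω → Fin n → ℝ} {Y : Ω → ℝ} (hX : ∀ k, Measurable[m₂] fun ω => X ω k)
    (hY : Measurable[m₂] Y) {A : Set Ω} {e : Fin (n+1) → Ω}
    (hcover : ∀ ω ∈ A, ∃ j, ω ∈ atomOf m₂ (e j))
    (hli : LinearIndependent ℝ
      (Fin.cons (fun _ : Fin (n+1) => (1:ℝ)) (fun (k : Fin n) (j : Fin (n+1)) => X (e j) k))) :
    ∃ (c : ℝ) (θ : Fin n → ℝ), ∀ ω ∈ A, Y ω = c + ∑ k, θ k * X ω k := by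
  obtain ⟨c, θ, hcθ⟩ := exists_eq_add_sum_mul_of_linearIndependent hli (fun j => Y (e j))
  refine ⟨c, θ, fun ω hω => ?_⟩
  obtain ⟨j, hj⟩ := hcover ω hω
  rw [hY.apply_eq_of_mem_atomOf hj, hcθ j]
  simp only [(hX _).apply_eq_of_mem_atomOf hj]

variable [Finite Ω] {m m₂ : MeasurableSpace Ω} [mΩ : MeasurableSpace Ω]
  [MeasurableSingletonClass Ω] {μ : Measure Ω} [IsFiniteMeasure μ]

theorem setIntegral_atomOf_eq_mul_of_condExp_eq (hm : m ≤ mΩ) {Y₁ Y₂ : Ω → ℝ}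
    (hY : μ[Y₂|m] = Y₁) (ω₀ : Ω) :
    ∫ ω in atomOf m ω₀, Y₂ ω ∂μ = μ.real (atomOf m ω₀) * Y₁ ω₀ := by
  have hY₁ : Measurable[m] Y₁ := hY ▸ stronglyMeasurable_condExp.measurable
  rw [← setIntegral_condExp hm .of_finite (measurableSet_atomOf m ω₀), hY,
    setIntegral_congr_fun (hm _ (measurableSet_atomOf m ω₀))
      fun ω hω => hY₁.apply_eq_of_mem_atomOf hω,
    setIntegral_const, smul_eq_mul]

theorem eq_add_sum_mul_on_atomOf_of_condExp_eq (hμ : ∀ ω, μ {ω} ≠ 0)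
    (hm : m ≤ mΩ) {X₁ X₂ : Ω → Fin n → ℝ} {Y₁ Y₂ : Ω → ℝ}
    (hX : ∀ k, μ[fun ω => X₂ ω k|m] = fun ω => X₁ ω k) (hY : μ[Y₂|m] = Y₁)
    {ω₀ : Ω} {c : ℝ} {θ : Fin n → ℝ} (h : ∀ ω ∈ atomOf m ω₀, Y₂ ω = c + ∑ k, θ k * X₂ ω k) :
    ∀ ω ∈ atomOf m ω₀, Y₁ ω = c + ∑ k, θ k * X₁ ω k := by
  have hA : MeasurableSet (atomOf m ω₀) := hm _ (measurableSet_atomOf m ω₀)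
  have hApos : μ.real (atomOf m ω₀) ≠ 0 := (measureReal_ne_zero_iff).2 fun h0 =>
    hμ ω₀ (measure_mono_null (Set.singleton_subset_iff.2 (mem_atomOf m ω₀)) h0)
  have hint : ∀ f : Ω → ℝ, Integrable f (μ.restrict (atomOf m ω₀)) := fun _ => .of_finite
  have hmean : μ.real (atomOf m ω₀) * Y₁ ω₀
      = μ.real (atomOf m ω₀) * (c + ∑ k, θ k * X₁ ω₀ k) := by
    rw [← setIntegral_atomOf_eq_mul_of_condExp_eq hm hY, setIntegral_congr_fun hA h,
      integral_add (hint _) (hint _), integral_finsetSum _ fun k _ => hint _, setIntegral_const,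
      smul_eq_mul]
    simp only [integral_const_mul, setIntegral_atomOf_eq_mul_of_condExp_eq hm (hX _)]
    rw [mul_add, Finset.mul_sum]
    ring_nf
  have hY₁ : Measurable[m] Y₁ := hY ▸ stronglyMeasurable_condExp.measurable
  have hX₁ : ∀ k, Measurable[m] fun ω => X₁ ω k :=
    fun k => hX k ▸ stronglyMeasurable_condExp.measurable
  intro ω hω
  rw [hY₁.apply_eq_of_mem_atomOf hω, mul_left_cancel₀ hApos hmean]
  simp only [(hX₁ _).apply_eq_of_mem_atomOf hω]

theorem exists_sub_eq_sum_mul_sub_on_atomOf (hμ : ∀ ω, μ {ω} ≠ 0) (hm : m ≤ mΩ)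
    {X₁ X₂ : Ω → Fin n → ℝ} {Y₁ Y₂ : Ω → ℝ}
    (hX₂ : ∀ k, Measurable[m₂] fun ω => X₂ ω k) (hY₂ : Measurable[m₂] Y₂)
    (hX : ∀ k, μ[fun ω => X₂ ω k|m] = fun ω => X₁ ω k) (hY : μ[Y₂|m] = Y₁)
    {ω₀ : Ω} {e : Fin (n+1) → Ω} (hcover : ∀ ω ∈ atomOf m ω₀, ∃ j, ω ∈ atomOf m₂ (e j))
    (hli : LinearIndependent ℝ
      (Fin.cons (fun _ : Fin (n+1) => (1:ℝ)) (fun (k : Fin n) (j : Fin (n+1)) => X₂ (e j) k))) :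
    ∃ θ : Fin n → ℝ, ∀ ω ∈ atomOf m ω₀, Y₂ ω - Y₁ ω = ∑ k, θ k * (X₂ ω k - X₁ ω k) := by
  obtain ⟨c, θ, h₂⟩ := exists_eq_add_sum_mul_on_of_linearIndependent hX₂ hY₂ hcover hli
  have h₁ := eq_add_sum_mul_on_atomOf_of_condExp_eq hμ hm hX hY h₂
  refine ⟨θ, fun ω hω => ?_⟩
  rw [h₂ ω hω, h₁ ω hω]
  simp only [mul_sub, Finset.sum_sub_distrib]
  ring

/-- Martingale representation on a tree with `n + 1` branches per node: the increment of a
martingale is a predictable linear combination of the increments of `X`. -/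
theorem exists_measurable_sub_eq_sum_mul_sub (hμ : ∀ ω, μ {ω} ≠ 0) (hm : m ≤ mΩ)
    {X₁ X₂ : Ω → Fin n → ℝ} {Y₁ Y₂ : Ω → ℝ}
    (hX₂ : ∀ k, Measurable[m₂] fun ω => X₂ ω k) (hY₂ : Measurable[m₂] Y₂)
    (hX : ∀ k, μ[fun ω => X₂ ω k|m] = fun ω => X₁ ω k) (hY : μ[Y₂|m] = Y₁)
    (hbranch : ∀ ω₀, ∃ e : Fin (n+1) → Ω, (∀ ω ∈ atomOf m ω₀, ∃ j, ω ∈ atomOf m₂ (e j)) ∧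
      LinearIndependent ℝ
        (Fin.cons (fun _ : Fin (n+1) => (1:ℝ)) (fun (k : Fin n) (j : Fin (n+1)) => X₂ (e j) k))) :
    ∃ θ : Ω → Fin n → ℝ, (∀ k, Measurable[m] fun ω => θ ω k) ∧
      ∀ ω, Y₂ ω - Y₁ ω = ∑ k, θ ω k * (X₂ ω k - X₁ ω k) := by
  obtain ⟨θ, hθ_atom, hθ⟩ := exists_forall_mem_atomOf_of_forall fun ω₀ => by
    obtain ⟨e, hcover, hli⟩ := hbranch ω₀
    exact exists_sub_eq_sum_mul_sub_on_atomOf hμ hm hX₂ hY₂ hX hY hcover hli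
  exact ⟨θ, fun k => measurable_of_forall_mem_atomOf fun ω ω' h => by rw [hθ_atom ω ω' h], hθ⟩

end Representation

namespace SM

variable {Ω : Type*} {n ℓ : ℕ} (M : SM Ω n ℓ)

theorem exp_mul_ΨK (l : Fin (ℓ+1)) (Pt : Ω → Fin n → ℝ) (ω : Ω) (i : Fin n) :
    Real.exp (-(M.r * M.t l)) * M.ΨK l Pt ω i
      = Real.exp (-(M.r * M.t l)) * M.x l ω i
        + Real.exp (-(M.r * M.T)) * ((∑ j, M.L j i * (M.β + (1 - M.β) * Pt ω j)) - M.pbar i) := by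
  have hdisc : Real.exp (-(M.r * M.t l)) * M.disc l = Real.exp (-(M.r * M.T)) := by
    rw [disc, ← Real.exp_add]
    ring_nf
  rw [ΨK]
  linear_combination ((∑ j, M.L j i * (M.β + (1 - M.β) * Pt ω j)) - M.pbar i) * hdisc

variable [MeasurableSpace Ω] {M} {𝓕 : Fin (ℓ+1) → MeasurableSpace Ω} {μ : Measure Ω}
  {K P : Fin (ℓ+1) → Ω → Fin n → ℝ} {τ : Fin n → Ω → ℝ}

theorem P_eq_condExp_of_mem_clearingSet (hz : (K, P, τ) ∈ M.clearingSet 𝓕 μ) (l : Fin (ℓ+1))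
    (ω : Ω) (i : Fin n) : P l ω i = μ[fun ω' => indR (M.T < τ i ω')|𝓕 l] ω :=
  (congrFun (congrFun (congrFun (congrArg (·.2.1) hz.2) l) ω) i).symm

variable {xt Kt : Fin (ℓ+1) → Ω → Fin n → ℝ}

theorem discounted_K_eq (hz : (K, P, τ) ∈ M.clearingSet 𝓕 μ)
    (hxt : ∀ l ω k, xt l ω k = Real.exp (-(M.r * M.t l)) * M.x l ω k)
    (hKt : ∀ l ω i, Kt l ω i = Real.exp (-(M.r * M.t l)) * K l ω i)
    (l : Fin (ℓ+1)) (ω : Ω) (i : Fin n) :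
    Kt l ω i = xt l ω i
      + Real.exp (-(M.r * M.T)) * ((∑ j, M.L j i * (M.β + (1 - M.β) * P l ω j)) - M.pbar i) := by
  have hK : K l ω i = M.ΨK l (P l) ω i :=
    (congrFun (congrFun (congrFun (congrArg Prod.fst hz.2) l) ω) i).symm
  rw [hKt, hxt, hK, exp_mul_ΨK]

theorem discounted_K_sub (hz : (K, P, τ) ∈ M.clearingSet 𝓕 μ)
    (hxt : ∀ l ω k, xt l ω k = Real.exp (-(M.r * M.t l)) * M.x l ω k)
    (hKt : ∀ l ω i, Kt l ω i = Real.exp (-(M.r * M.t l)) * K l ω i)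
    (l l' : Fin (ℓ+1)) (ω : Ω) (i : Fin n) :
    Kt l' ω i - Kt l ω i = xt l' ω i - xt l ω i
      + (1 - M.β) * ∑ j, M.L j i * (Real.exp (-(M.r * M.T)) * (P l' ω j - P l ω j)) := by
  rw [discounted_K_eq hz hxt hKt, discounted_K_eq hz hxt hKt]
  have hsum : Real.exp (-(M.r * M.T)) * (∑ j, M.L j i * (M.β + (1 - M.β) * P l' ω j))
        - Real.exp (-(M.r * M.T)) * (∑ j, M.L j i * (M.β + (1 - M.β) * P l ω j))
      = (1 - M.β) * ∑ j, M.L j i * (Real.exp (-(M.r * M.T)) * (P l' ω j - P l ω j)) := by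
    simp only [Finset.mul_sum, ← Finset.sum_sub_distrib]
    exact Finset.sum_congr rfl fun j _ => by ring
  linear_combination hsum

namespace Valid

variable (hM : M.Valid 𝓕 μ)
include hM

theorem measurableSet (s : Set Ω) : MeasurableSet s := by
  have htop : ‹MeasurableSpace Ω› = (⊤ : MeasurableSpace Ω) := hM.hTop
  rw [htop]
  exact MeasurableSpace.measurableSet_top

theorem measurableSingletonClass : MeasurableSingletonClass Ω :=
  ⟨fun _ => hM.measurableSet _⟩

theorem le (l : Fin (ℓ+1)) : 𝓕 l ≤ ‹MeasurableSpace Ω› :=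
  fun s _ => hM.measurableSet s

theorem condExp_P_succ [Countable Ω] (hz : (K, P, τ) ∈ M.clearingSet 𝓕 μ) (l : Fin ℓ)
    (i : Fin n) : μ[fun ω => P l.succ ω i|𝓕 l.castSucc] = fun ω => P l.castSucc ω i := by
  have := hM.hprob
  have hP : ∀ l, (fun ω => P l ω i) = μ[fun ω' => indR (M.T < τ i ω')|𝓕 l] :=
    fun l => funext (P_eq_condExp_of_mem_clearingSet hz l · i)
  rw [hP, hP]
  exact funext fun ω => ae_iff_of_countable.1
    (condExp_condExp_of_le (hM.hmono (Fin.castSucc_le_succ l)) (hM.le _)) ω (hM.hpos ω).ne'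

theorem P_zero (hz : (K, P, τ) ∈ M.clearingSet 𝓕 μ) (ω : Ω) (i : Fin n) :
    P 0 ω i = (μ {ω' | M.T < τ i ω'}).toReal := by
  have := hM.hprob
  have hind : (fun ω' => indR (M.T < τ i ω')) = {ω' | M.T < τ i ω'}.indicator 1 :=
    funext fun ω' => by simp [indR, Set.indicator_apply]
  rw [P_eq_condExp_of_mem_clearingSet hz, hM.h0, condExp_bot, hind,
    integral_indicator_one (hM.measurableSet _), measureReal_def]

theorem P_last [Finite Ω] (hz : (K, P, τ) ∈ M.clearingSet 𝓕 μ) (ω : Ω) (i : Fin n) :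
    P (Fin.last ℓ) ω i = indR (M.T < τ i ω) := by
  have := hM.hprob
  have := hM.measurableSingletonClass
  rw [P_eq_condExp_of_mem_clearingSet hz, hM.hlast,
    condExp_of_stronglyMeasurable le_rfl .of_discrete .of_finite]

end Valid

end SM

open SM in
/-- Proposition 2.7: stochastic-volatility form of the capital dynamics.
Under the multinomial-tree nondegeneracy assumptions on the discounted external assets
`xt l ω k = e^{-r t_l} x_k(t_l, ω)`, any clearing solution `(K, P, τ)` of `Ψ^T` admits
adapted processes `θ_j` such that the discounted capital `Kt l ω i = e^{-r t_l} K_i(t_l, ω)`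
satisfies `ΔKt_i = Δxt_i + (1-β) Σ_j L_{ji} θ_j(t_l)ᵀ Δxt`, together with the stated
initial and terminal conditions. -/
theorem clearing_capital_volatility_form
    {Ω : Type*} [Fintype Ω] [MeasurableSpace Ω] {n ℓ : ℕ}
    (M : SM Ω n ℓ) (𝓕 : Fin (ℓ+1) → MeasurableSpace Ω) (μ : MeasureTheory.Measure Ω)
    (hM : M.Valid 𝓕 μ)
    (hbranch : ∀ (l : Fin ℓ) (ω : Ω),
      Set.ncard {A : Set Ω | ∃ ω' ∈ atomOf (𝓕 l.castSucc) ω, A = atomOf (𝓕 l.succ) ω'}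
        = n + 1)
    (xt : Fin (ℓ+1) → Ω → Fin n → ℝ)
    (hxt : ∀ l ω k, xt l ω k = Real.exp (-(M.r * M.t l)) * M.x l ω k)
    (hxt_mart : ∀ (l : Fin ℓ) (k : Fin n) (ω : Ω),
      (μ[fun ω' => xt l.succ ω' k | 𝓕 l.castSucc]) ω = xt l.castSucc ω k)
    (hLI : ∀ (l : Fin ℓ) (ω : Ω) (e : Fin (n+1) → Ω),
      (∀ j, e j ∈ atomOf (𝓕 l.castSucc) ω) →
      (∀ j j', j ≠ j' → atomOf (𝓕 l.succ) (e j) ≠ atomOf (𝓕 l.succ) (e j')) →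
      LinearIndependent ℝ
        (Fin.cons (fun _ : Fin (n+1) => (1:ℝ))
          (fun (k : Fin n) (j : Fin (n+1)) => xt l.succ (e j) k)))
    (K P : Fin (ℓ+1) → Ω → Fin n → ℝ) (τ : Fin n → Ω → ℝ)
    (hz : (K, P, τ) ∈ M.clearingSet 𝓕 μ)
    (Kt : Fin (ℓ+1) → Ω → Fin n → ℝ)
    (hKt : ∀ l ω i, Kt l ω i = Real.exp (-(M.r * M.t l)) * K l ω i) :
    ∃ θ : Fin n → Fin ℓ → Ω → Fin n → ℝ,
      (∀ j l k, Measurable[𝓕 l.castSucc] fun ω => θ j l ω k) ∧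
      (∀ (l : Fin ℓ) (ω : Ω) (i : Fin n),
        Kt l.succ ω i - Kt l.castSucc ω i
          = (xt l.succ ω i - xt l.castSucc ω i)
            + (1 - M.β) * ∑ j, M.L j i *
                (∑ k, θ j l ω k * (xt l.succ ω k - xt l.castSucc ω k))) ∧
      (∀ (ω : Ω) (i : Fin n),
        Kt 0 ω i
          = xt 0 ω i
            + Real.exp (-(M.r * M.T)) *
                (∑ j, M.L j i * (M.β + (1 - M.β) * (μ {ω' | M.T < τ j ω'}).toReal))
            - Real.exp (-(M.r * M.T)) * M.pbar i) ∧
      (∀ (ω : Ω) (i : Fin n),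
        Kt (Fin.last ℓ) ω i
          = xt (Fin.last ℓ) ω i
            + Real.exp (-(M.r * M.T)) *
                ((∑ j, M.L j i * (M.β + (1 - M.β) * indR (M.T < τ j ω))) - M.pbar i)) := by
  have := hM.hprob
  have := hM.measurableSingletonClass
  have hxt_meas : ∀ l k, Measurable[𝓕 l] fun ω => xt l ω k := fun l k => by
    simp only [hxt]
    exact (hM.hx l k).const_mul _
  have hrep : ∀ j (l : Fin ℓ), ∃ φ : Ω → Fin n → ℝ,
      (∀ k, Measurable[𝓕 l.castSucc] fun ω => φ ω k) ∧
      ∀ ω, P l.succ ω j - P l.castSucc ω j = ∑ k, φ ω k * (xt l.succ ω k - xt l.castSucc ω k) :=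
    fun j l => exists_measurable_sub_eq_sum_mul_sub (fun ω => (hM.hpos ω).ne') (hM.le _)
      (hxt_meas l.succ) (hz.1.2.1 l.succ j) (fun k => funext (hxt_mart l k))
      (hM.condExp_P_succ hz l j) fun ω₀ => by
        obtain ⟨e, hmem, hdistinct, hcover⟩ := exists_enum_of_ncard_eq (hbranch l ω₀)
        exact ⟨e, hcover, hLI l ω₀ e hmem hdistinct⟩
  choose φ hφ_meas hφ using hrep
  refine ⟨fun j l ω k => Real.exp (-(M.r * M.T)) * φ j l ω k,
    fun j l k => (hφ_meas j l k).const_mul _, fun l ω i => ?_, fun ω i => ?_, fun ω i => ?_⟩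
  · simp only [discounted_K_sub hz hxt hKt, hφ, Finset.mul_sum, mul_assoc]
  · simp only [discounted_K_eq hz hxt hKt, hM.P_zero hz]
    ring
  · simp only [discounted_K_eq hz hxt hKt, hM.P_last hz]

end Paper
end

section
/- The set of fixed points of Ψ^{H,T}, i.e. {(K*, P*, τ*) ∈ 𝔻^T : (K*, P*, τ*) = Ψ^{H,T}(K*, P*, τ*)}, is nonempty and forms a complete lattice in 𝔻^T under the componentwise order; in particular there exist a greatest solution (K^↑, P^↑, τ^↑) and a least solution (K^↓, P^↓, τ^↓) with (K^↓, P^↓, τ^↓) ≤ (K^↑, P^↑, τ^↑). -/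
open MeasureTheory

namespace Paper

namespace SM

/-- the historical-price-accounting survival component `Ψ^{H,T}_P`: the indicator `1{τ_i > t_l}` -/
noncomputable def ΨPH (M : SM Ω n ℓ) (τ : Fin n → Ω → ℝ) (l : Fin (ℓ+1))
    (ω : Ω) (i : Fin n) : ℝ :=
  indR (M.t l < τ i ω)

/-- the historical price accounting clearing map `Ψ^{H,T}` -/
noncomputable def ΨmapH (M : SM Ω n ℓ) (z : Tri Ω n ℓ) : Tri Ω n ℓ :=
  (fun l ω i => M.ΨK l (z.2.1 l) ω i,
   fun l ω i => M.ΨPH z.2.2 l ω i,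
   fun i ω => M.Ψτ z.1 i ω)

/-- the set of historical price accounting clearing solutions: fixed points of `Ψ^{H,T}` in `𝔻^T` -/
def clearingSetH [MeasurableSpace Ω] (M : SM Ω n ℓ)
    (𝓕 : Fin (ℓ+1) → MeasurableSpace Ω) : Set (Tri Ω n ℓ) :=
  {z | M.memD 𝓕 z.1 z.2.1 z.2.2 ∧ M.ΨmapH z = z}

end SM

/-!
Every component of `Ψ^{H,T}` is monotone: more capital delays default, a later default keeps the
survival indicator `1{τ_i > t}` up, and higher survival indicators raise the recovered interbank
payments and hence capital. On a finite `Ω` the pointwise infimum of adapted processes is adapted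
and the infimum of stopping times with values in the finite grid `{t_0, …, t_ℓ, T + 1}` is again
such a stopping time, so the domain on which `Ψ^{H,T}` acts is a complete lattice and Tarski's
fixed point theorem applies.
-/

section FiniteSpace

variable {Ω : Type*} [Finite Ω] {m : MeasurableSpace Ω}

theorem Finite.measurableSet_iUnion {ι : Sort*} {s : ι → Set Ω}
    (hs : ∀ i, MeasurableSet[m] (s i)) : MeasurableSet[m] (⋃ i, s i) := by
  rw [← Set.sUnion_range]
  exact .sUnion (Set.to_countable _) (Set.forall_mem_range.2 hs)

theorem Finite.measurableSet_iInter {ι : Sort*} {s : ι → Set Ω}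
    (hs : ∀ i, MeasurableSet[m] (s i)) : MeasurableSet[m] (⋂ i, s i) := by
  rw [← Set.sInter_range]
  exact .sInter (Set.to_countable _) (Set.forall_mem_range.2 hs)

theorem Finite.measurable_ciInf {α : Type*} [ConditionallyCompleteLinearOrder α]
    [TopologicalSpace α] [OrderTopology α] [SecondCountableTopology α] [MeasurableSpace α]
    [BorelSpace α] {ι : Sort*} [Nonempty ι] {f : ι → Ω → α} (hf : ∀ i, Measurable[m] (f i))
    (hbdd : ∀ ω, BddBelow (Set.range fun i => f i ω)) : Measurable[m] fun ω => ⨅ i, f i ω := by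
  refine measurable_of_Iio fun c => ?_
  have hpre : (fun ω => ⨅ i, f i ω) ⁻¹' Set.Iio c = ⋃ i, f i ⁻¹' Set.Iio c := by
    ext ω
    simp [ciInf_lt_iff (hbdd ω)]
  rw [hpre]
  exact Finite.measurableSet_iUnion fun i => hf i measurableSet_Iio

end FiniteSpace

theorem latticeStructure_range {L X : Type*} [CompleteLattice L] [Preorder X] (e : L ↪o X) :
    LatticeStructure (Set.range e) := by
  refine ⟨⟨e ⊥, ⊥, rfl⟩, ⟨e ⊤, ⟨⊤, rfl⟩, ?_⟩, ⟨e ⊥, ⟨⊥, rfl⟩, ?_⟩, fun A hA => ?_⟩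
  · exact Set.forall_mem_range.2 fun x => e.monotone le_top
  · exact Set.forall_mem_range.2 fun x => e.monotone bot_le
  obtain ⟨B, rfl⟩ : ∃ B, e '' B = A := ⟨_, Set.image_preimage_eq_of_subset hA⟩
  simp only [Set.forall_mem_image, Set.forall_mem_range, Set.exists_range_iff, e.le_iff_le]
  exact ⟨⟨sSup B, fun _ => le_sSup, fun _ => sSup_le⟩, ⟨sInf B, fun _ => sInf_le, fun _ => le_sInf⟩⟩

noncomputable abbrev completeLatticeOfCsInfClosed {X : Type*} [ConditionallyCompleteLattice X]
    (S : Set X) {top : X} (htop : top ∈ S) (hle : ∀ x ∈ S, x ≤ top) (hbdd : BddBelow S)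
    (hinf : ∀ A ⊆ S, A.Nonempty → sInf A ∈ S) : CompleteLattice S :=
  have hsub (A : Set S) : insert top (Subtype.val '' A) ⊆ S :=
    Set.insert_subset htop (Subtype.coe_image_subset S A)
  letI : InfSet S := ⟨fun A => ⟨sInf (insert top (Subtype.val '' A)),
    hinf _ (hsub A) (Set.insert_nonempty _ _)⟩⟩
  completeLatticeOfInf S fun A =>
    ⟨fun a ha => csInf_le (hbdd.mono (hsub A)) (Set.mem_insert_of_mem _ ⟨a, ha, rfl⟩),
     fun b hb => le_csInf (Set.insert_nonempty _ _) <| by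
      rintro _ (rfl | ⟨a, ha, rfl⟩)
      exacts [hle b b.2, hb ha]⟩

section Processes

variable {ι Ω κ : Type*} (𝓕 : ι → MeasurableSpace Ω)

def adaptedBox (lo hi : ι → Ω → κ → ℝ) : Set (ι → Ω → κ → ℝ) :=
  {f | (∀ l i, Measurable[𝓕 l] fun ω => f l ω i) ∧ f ∈ Set.Icc lo hi}

def stoppingTimes (t : ι → ℝ) (V : Set ℝ) : Set (κ → Ω → ℝ) :=
  {τ | (∀ i ω, τ i ω ∈ V) ∧ ∀ i l, MeasurableSet[𝓕 l] {ω | t l < τ i ω}}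

variable [Finite Ω] {𝓕}

theorem sInf_mem_adaptedBox {lo hi : ι → Ω → κ → ℝ} {A : Set (ι → Ω → κ → ℝ)}
    (hA : A ⊆ adaptedBox 𝓕 lo hi) (hne : A.Nonempty) : sInf A ∈ adaptedBox 𝓕 lo hi := by
  have hlo : lo ∈ lowerBounds A := fun f hf => (hA hf).2.1
  obtain ⟨f₀, hf₀⟩ := hne
  have : Nonempty A := ⟨⟨f₀, hf₀⟩⟩
  refine ⟨fun l i => ?_, le_csInf ⟨f₀, hf₀⟩ hlo, (csInf_le ⟨lo, hlo⟩ hf₀).trans (hA hf₀).2.2⟩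
  simp only [sInf_apply, iInf_apply]
  exact Finite.measurable_ciInf (fun f => (hA f.2).1 l i)
    fun ω => ⟨lo l ω i, Set.forall_mem_range.2 fun f => (hA f.2).2.1 l ω i⟩

theorem sInf_mem_stoppingTimes {t : ι → ℝ} {V : Set ℝ} (hV : V.Finite)
    {A : Set (κ → Ω → ℝ)} (hA : A ⊆ stoppingTimes 𝓕 t V) (hne : A.Nonempty) :
    sInf A ∈ stoppingTimes 𝓕 t V := by
  have : Nonempty A := hne.to_subtype
  have hrange (i : κ) (ω : Ω) : Set.range (fun τ : A => τ.1 i ω) ⊆ V :=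
    Set.range_subset_iff.2 fun τ => (hA τ.2).1 i ω
  simp only [stoppingTimes, Set.mem_ofPred_eq, sInf_apply, iInf_apply]
  refine ⟨fun i ω => hrange i ω (Set.Nonempty.csInf_mem (Set.range_nonempty _)
    (hV.subset (hrange i ω))), fun i l => ?_⟩
  have hset : {ω | t l < ⨅ τ : A, τ.1 i ω} = ⋂ τ : A, {ω | t l < τ.1 i ω} := by
    ext ω
    simp [iInf, (hV.subset (hrange i ω)).lt_csInf_iff (Set.range_nonempty _)]
  rw [hset]
  exact Finite.measurableSet_iInter fun τ => (hA τ.2).2 i l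

noncomputable abbrev adaptedBox.completeLattice {lo hi : ι → Ω → κ → ℝ} (hlohi : lo ≤ hi)
    (hhi : ∀ l i, Measurable[𝓕 l] fun ω => hi l ω i) : CompleteLattice (adaptedBox 𝓕 lo hi) :=
  completeLatticeOfCsInfClosed _ ⟨hhi, hlohi, le_rfl⟩ (fun _ hf => hf.2.2)
    ⟨lo, fun _ hf => hf.2.1⟩ fun _ hA hne => sInf_mem_adaptedBox hA hne

noncomputable abbrev stoppingTimes.completeLattice (t : ι → ℝ) {V : Set ℝ} (hV : V.Finite)
    (hne : V.Nonempty) : CompleteLattice (stoppingTimes (κ := κ) 𝓕 t V) :=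
  completeLatticeOfCsInfClosed _ (top := fun _ _ => sSup V)
    ⟨fun _ _ => hne.csSup_mem hV, fun _ _ => MeasurableSet.const _⟩
    (fun _ hτ i ω => le_csSup hV.bddAbove (hτ.1 i ω))
    ⟨fun _ _ => sInf V, fun _ hτ i ω => csInf_le hV.bddBelow (hτ.1 i ω)⟩
    fun _ hA hne => sInf_mem_stoppingTimes hV hA hne

end Processes

theorem indR_nonneg (p : Prop) : 0 ≤ indR p := by
  unfold indR; split <;> norm_num

theorem indR_le_one (p : Prop) : indR p ≤ 1 := by
  unfold indR; split <;> norm_num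

theorem indR_mono {p q : Prop} (h : p → q) : indR p ≤ indR q := by
  unfold indR; split_ifs <;> simp_all

namespace SM

variable {Ω : Type*} {n ℓ : ℕ} (M : SM Ω n ℓ)

noncomputable def Kmin : Fin (ℓ+1) → Ω → Fin n → ℝ :=
  fun l ω i => M.x l ω i - M.disc l * M.pbar i

noncomputable def Kmax : Fin (ℓ+1) → Ω → Fin n → ℝ :=
  fun l ω i => M.x l ω i + M.disc l * ((∑ j, M.L j i) - M.pbar i)

def defaultTimes : Set ℝ := insert (M.T + 1) (Set.range M.t)

theorem defaultTimes_finite : M.defaultTimes.Finite := (Set.finite_range _).insert _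

theorem mem_defaultTimes {s : ℝ} : s ∈ M.defaultTimes ↔ (∃ l, s = M.t l) ∨ s = M.T + 1 := by
  simp only [defaultTimes, Set.mem_insert_iff, Set.mem_range, eq_comm (a := s), or_comm]

theorem Ψτ_mem_defaultTimes (K : Fin (ℓ+1) → Ω → Fin n → ℝ) (i : Fin n) (ω : Ω) :
    M.Ψτ K i ω ∈ M.defaultTimes := by
  have hsub : insert (M.T + 1) (M.t '' {l | K l ω i < 0}) ⊆ M.defaultTimes :=
    Set.insert_subset_insert (Set.image_subset_range _ _)
  exact hsub ((Set.insert_nonempty _ _).csInf_mem (M.defaultTimes_finite.subset hsub))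

variable {M} {𝓕 : Fin (ℓ+1) → MeasurableSpace Ω}

theorem ΨPH_mem_adaptedBox {V : Set ℝ} {τ : Fin n → Ω → ℝ} (hτ : τ ∈ stoppingTimes 𝓕 M.t V) :
    M.ΨPH τ ∈ adaptedBox 𝓕 0 1 :=
  ⟨fun l i => Measurable.ite (hτ.2 i l) measurable_const measurable_const,
    fun _ _ _ => indR_nonneg _, fun _ _ _ => indR_le_one _⟩

theorem ΨPH_mono {τ τ' : Fin n → Ω → ℝ} (h : τ ≤ τ') : M.ΨPH τ ≤ M.ΨPH τ' :=
  fun _ ω i => indR_mono fun hlt => hlt.trans_le (h i ω)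

theorem Ψτ_mono {K K' : Fin (ℓ+1) → Ω → Fin n → ℝ} (h : K ≤ K') : M.Ψτ K ≤ M.Ψτ K' :=
  fun i ω => csInf_le_csInf
    (M.defaultTimes_finite.subset (Set.insert_subset_insert (Set.image_subset_range _ _))).bddBelow
    (Set.insert_nonempty _ _)
    (Set.insert_subset_insert (Set.image_mono fun _ hm => (h _ ω i).trans_lt hm))

variable (M 𝓕) in
/-- `𝔻^T` with each `τ_i` moreover a stopping time: this is what makes `1{τ_i > t}` adapted, and
a fixed point `(K, P, τ)` in `𝔻^T` has it anyway since `τ = Ψ^T_τ(K)`. -/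
abbrev Domain : Type _ :=
  adaptedBox 𝓕 M.Kmin M.Kmax × adaptedBox 𝓕 (0 : Fin (ℓ+1) → Ω → Fin n → ℝ) 1 ×
    stoppingTimes (κ := Fin n) 𝓕 M.t M.defaultTimes

variable (M 𝓕) in
def Domain.toTri : Domain M 𝓕 ↪o Tri Ω n ℓ :=
  OrderEmbedding.ofMapLEIff (fun z => (z.1.1, z.2.1.1, z.2.2.1)) fun _ _ => Iff.rfl

variable [MeasurableSpace Ω] {μ : Measure Ω}

theorem Valid.t_lt_T_add_one (hM : M.Valid 𝓕 μ) (l : Fin (ℓ+1)) : M.t l < M.T + 1 :=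
  (hM.htT ▸ hM.ht.monotone (Fin.le_last l)).trans_lt (lt_add_one _)

theorem Valid.recovery_mem_Icc (hM : M.Valid 𝓕 μ) {p : ℝ} (hp : p ∈ Set.Icc 0 1) :
    M.β + (1 - M.β) * p ∈ Set.Icc 0 1 := by
  have := hM.hβ0; have := hM.hβ1
  constructor <;> nlinarith [hp.1, hp.2]

theorem Valid.ΨK_mem_Icc (hM : M.Valid 𝓕 μ) {P : Ω → Fin n → ℝ} {l : Fin (ℓ+1)} {ω : Ω}
    (hP : ∀ j, P ω j ∈ Set.Icc 0 1) (i : Fin n) :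
    M.ΨK l P ω i ∈ Set.Icc (M.Kmin l ω i) (M.Kmax l ω i) := by
  have hd : 0 ≤ M.disc l := (Real.exp_pos _).le
  have h0 : 0 ≤ ∑ j, M.L j i * (M.β + (1 - M.β) * P ω j) :=
    Finset.sum_nonneg fun j _ => mul_nonneg (hM.hL j i) (hM.recovery_mem_Icc (hP j)).1
  have h1 : ∑ j, M.L j i * (M.β + (1 - M.β) * P ω j) ≤ ∑ j, M.L j i :=
    Finset.sum_le_sum fun j _ => mul_le_of_le_one_right (hM.hL j i) (hM.recovery_mem_Icc (hP j)).2
  unfold ΨK Kmin Kmax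
  constructor <;> nlinarith [mul_le_mul_of_nonneg_left h1 hd, mul_nonneg hd h0]

theorem Valid.ΨK_mono (hM : M.Valid 𝓕 μ) {P P' : Ω → Fin n → ℝ} {l : Fin (ℓ+1)} {ω : Ω}
    (h : ∀ j, P ω j ≤ P' ω j) (i : Fin n) : M.ΨK l P ω i ≤ M.ΨK l P' ω i := by
  unfold ΨK
  gcongr with j
  · exact (Real.exp_pos _).le
  · exact hM.hL j i
  · linarith [hM.hβ1]
  · exact h j

theorem Valid.ΨK_mem_adaptedBox (hM : M.Valid 𝓕 μ) {P : Fin (ℓ+1) → Ω → Fin n → ℝ}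
    (hP : P ∈ adaptedBox 𝓕 0 1) :
    (fun l ω i => M.ΨK l (P l) ω i) ∈ adaptedBox 𝓕 M.Kmin M.Kmax := by
  refine ⟨fun l i => ?_, fun l ω i => (hM.ΨK_mem_Icc (fun j => ?_) i).1,
    fun l ω i => (hM.ΨK_mem_Icc (fun j => ?_) i).2⟩
  · have hx := hM.hx l i
    have hPl := hP.1 l
    unfold ΨK
    fun_prop
  all_goals exact ⟨hP.2.1 l ω j, hP.2.2 l ω j⟩

theorem Valid.lt_Ψτ_iff (hM : M.Valid 𝓕 μ) (K : Fin (ℓ+1) → Ω → Fin n → ℝ) (i : Fin n) (ω : Ω)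
    (l : Fin (ℓ+1)) : M.t l < M.Ψτ K i ω ↔ ∀ m ≤ l, 0 ≤ K m ω i := by
  rw [Ψτ, (M.defaultTimes_finite.subset (Set.insert_subset_insert (Set.image_subset_range _ _))
    ).lt_csInf_iff (Set.insert_nonempty _ _)]
  simp only [Set.forall_mem_insert, Set.forall_mem_image, Set.mem_ofPred_eq, hM.ht.lt_iff_lt]
  refine (and_iff_right (hM.t_lt_T_add_one l)).trans (forall_congr' fun m => ?_)
  rw [← not_imp_not, not_lt, not_lt]

theorem Valid.Ψτ_mem_stoppingTimes (hM : M.Valid 𝓕 μ) {K : Fin (ℓ+1) → Ω → Fin n → ℝ}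
    (hK : ∀ l i, Measurable[𝓕 l] fun ω => K l ω i) :
    M.Ψτ K ∈ stoppingTimes 𝓕 M.t M.defaultTimes := by
  refine ⟨M.Ψτ_mem_defaultTimes K, fun i l => ?_⟩
  simp only [hM.lt_Ψτ_iff, Set.ofPred_forall]
  exact .iInter fun m => .iInter fun hm =>
    measurableSet_le measurable_const ((hK m i).mono (hM.hmono hm) le_rfl)

theorem Valid.Kmin_le_Kmax (hM : M.Valid 𝓕 μ) : M.Kmin ≤ M.Kmax := fun _ _ i =>
  have h := hM.ΨK_mem_Icc (P := 0) (fun _ => ⟨le_rfl, zero_le_one⟩) i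
  h.1.trans h.2

theorem Valid.Kmax_adapted (hM : M.Valid 𝓕 μ) (l : Fin (ℓ+1)) (i : Fin n) :
    Measurable[𝓕 l] fun ω => M.Kmax l ω i := by
  have hx := hM.hx l i
  unfold Kmax
  fun_prop

variable (M 𝓕) in
noncomputable abbrev Domain.completeLattice [Finite Ω] (hM : M.Valid 𝓕 μ) :
    CompleteLattice (Domain M 𝓕) :=
  letI := adaptedBox.completeLattice hM.Kmin_le_Kmax hM.Kmax_adapted
  letI := adaptedBox.completeLattice (𝓕 := 𝓕) (lo := (0 : Fin (ℓ+1) → Ω → Fin n → ℝ))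
    zero_le_one fun _ _ => measurable_const
  letI := stoppingTimes.completeLattice (κ := Fin n) (𝓕 := 𝓕) M.t M.defaultTimes_finite
    (Set.insert_nonempty _ _)
  inferInstance

noncomputable def Valid.hpaMap (hM : M.Valid 𝓕 μ) : Domain M 𝓕 →o Domain M 𝓕 where
  toFun z := (⟨_, hM.ΨK_mem_adaptedBox z.2.1.2⟩, ⟨_, ΨPH_mem_adaptedBox z.2.2.2⟩,
    ⟨_, hM.Ψτ_mem_stoppingTimes z.1.2.1⟩)
  monotone' _ _ h := ⟨fun _ _ i => hM.ΨK_mono (fun j => h.2.1 _ _ j) i, ΨPH_mono h.2.2, Ψτ_mono h.1⟩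

theorem Valid.clearingSetH_eq_range (hM : M.Valid 𝓕 μ) :
    M.clearingSetH 𝓕 =
      Set.range fun z : Function.fixedPoints hM.hpaMap => Domain.toTri M 𝓕 z.1 := by
  ext z
  constructor
  · rintro ⟨⟨hKm, hPm, hKlo, hKhi, hP, hτ⟩, hfix⟩
    have hτ_eq : z.2.2 = M.Ψτ z.1 := (congrArg (·.2.2) hfix).symm
    let y : Domain M 𝓕 := (⟨z.1, hKm, hKlo, hKhi⟩, ⟨z.2.1, hPm, fun l ω i => (hP l ω i).1,
      fun l ω i => (hP l ω i).2⟩, ⟨z.2.2, fun i ω => M.mem_defaultTimes.2 (hτ i ω),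
      hτ_eq ▸ (hM.Ψτ_mem_stoppingTimes hKm).2⟩)
    exact ⟨⟨y, (Domain.toTri M 𝓕).injective hfix⟩, rfl⟩
  · rintro ⟨⟨⟨⟨K, hK⟩, ⟨P, hP⟩, ⟨τ, hτ⟩⟩, hfix⟩, rfl⟩
    exact ⟨⟨hK.1, hP.1, hK.2.1, hK.2.2, fun l ω i => ⟨hP.2.1 l ω i, hP.2.2 l ω i⟩,
      fun i ω => M.mem_defaultTimes.1 (hτ.1 i ω)⟩, congrArg (Domain.toTri M 𝓕) hfix⟩

end SM

open SM in
/-- Proposition B.1: the set of fixed points of the historical price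
accounting clearing map `Ψ^{H,T}` in `𝔻^T` is nonempty and forms a complete lattice under
the componentwise order, with greatest and least solutions. -/
theorem hpa_clearing_lattice
    {Ω : Type*} [Fintype Ω] [MeasurableSpace Ω] {n ℓ : ℕ}
    (M : SM Ω n ℓ) (𝓕 : Fin (ℓ+1) → MeasurableSpace Ω) (μ : MeasureTheory.Measure Ω)
    (hM : M.Valid 𝓕 μ) :
    LatticeStructure (M.clearingSetH 𝓕) := by
  let := Domain.completeLattice M 𝓕 hM
  rw [hM.clearingSetH_eq_range]
  exact latticeStructure_range
    ((OrderEmbedding.subtype _).trans (Domain.toTri M 𝓕) : Function.fixedPoints hM.hpaMap ↪o _)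

end Paper
end
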